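/- arXiv:2203.08336 — 2 statements merged into one kernel-verified Lean document; each statement's English description precedes it below -/
import Mathlib

section
/- Let M be a compact metric space, f : M → M a homeomorphism, and let ℱ = {Y₁, …, Y_L} be a finite family of pairwise disjoint subsets of M each of which is wandering (f^n(Y_i) ∩ Y_i = ∅ for all n ≥ 1). Then every coding word in 𝒜_n(f, ℱ) contains each letter Y_i at most once; consequently c_{f,ℱ}(n) ≤ Σ_{k=0}^{L} C(n,k) · L!/(L−k)!, a polynomial in n of degree L, and hence [c_{f,ℱ}(n)] ≤ [n^L]. -/
open Function Metric Set Topology Filter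

variable {M : Type*}

/-- Y is a wandering set for f: f^n(Y) ∩ Y = ∅ for all n ≥ 1. -/
def Wandering (f : M → M) (Y : Set M) : Prop :=
  ∀ n : ℕ, 1 ≤ n → f^[n] '' Y ∩ Y = ∅

/-- The non-wandering set Ω(f). -/
def NonwanderingSet [TopologicalSpace M] (f : M → M) : Set M :=
  {x | ∀ U : Set M, IsOpen U → x ∈ U → ∃ n : ℕ, 1 ≤ n ∧ (f^[n] '' U ∩ U).Nonempty}

/-- The word w (with letters in ℱ ∪ {∞}, where `some j` is the letter Y_j and `none`
is the letter ∞ = complement of ∪ℱ) is a coding of the orbit segment of x. -/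
def Codes {L : ℕ} (f : M → M) (Y : Fin L → Set M) {n : ℕ}
    (w : Fin n → Option (Fin L)) (x : M) : Prop :=
  ∀ i : Fin n, (w i).elim (f^[(i : ℕ)] x ∉ ⋃ j, Y j) (fun j => f^[(i : ℕ)] x ∈ Y j)

/-- 𝒜_n(f,ℱ): the set of all codings of all orbit segments of length n. -/
def CodingWords {L : ℕ} (f : M → M) (Y : Fin L → Set M) (n : ℕ) :
    Set (Fin n → Option (Fin L)) :=
  {w | ∃ x : M, Codes f Y w x}

/-- c_{f,ℱ}(n) = #𝒜_n(f,ℱ). -/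
noncomputable def codingCount {L : ℕ} (f : M → M) (Y : Fin L → Set M) (n : ℕ) : ℕ :=
  Nat.card (CodingWords f Y n)

/-- The sets Y₁,…,Y_L are mutually singular: for every N there are a point x and times
t i with f^[t i] x ∈ Y i and |t i − t j| > N for i ≠ j. -/
def MutuallySingular {L : ℕ} (f : M → M) (Y : Fin L → Set M) : Prop :=
  ∀ N : ℕ, ∃ x : M, ∃ t : Fin L → ℕ,
    (∀ i, f^[t i] x ∈ Y i) ∧ ∀ i j, i ≠ j → N < max (t i - t j) (t j - t i)

/-- E is an (n,ε)-separated set for f. -/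
def Separated [MetricSpace M] (f : M → M) (ε : ℝ) (n : ℕ) (E : Set M) : Prop :=
  ∀ x ∈ E, ∀ y ∈ E, x ≠ y → ∃ i : ℕ, i < n ∧ ε ≤ dist (f^[i] x) (f^[i] y)

/-- s_{f,ε}(n): the maximal cardinality of an (n,ε)-separated set. -/
noncomputable def sepCount [MetricSpace M] (f : M → M) (ε : ℝ) (n : ℕ) : ℕ :=
  sSup {k : ℕ | ∃ E : Finset M, Separated f ε n (E : Set M) ∧ E.card = k}

/-- The full orbit of p under the homeomorphism with inverse g. -/
def FullOrbit (f g : M → M) (p : M) : Set M :=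
  {y | ∃ n : ℕ, y = f^[n] p ∨ y = g^[n] p}

/-- The stable set of a set A: points whose forward orbit converges to A. -/
def StableSetOf [MetricSpace M] (f : M → M) (A : Set M) : Set M :=
  {x | Tendsto (fun n => infDist (f^[n] x) A) atTop (nhds 0)}

/-- p is a periodic point of f. -/
def IsPeriodicPoint (f : M → M) (p : M) : Prop := ∃ k : ℕ, 1 ≤ k ∧ f^[k] p = p

/-- The edge relation of the connection graph: p, q are periodic points with distinct
orbits and W^u(θ(p)) ∩ W^s(θ(q)) ≠ ∅. -/
def Conn [MetricSpace M] (f : M ≃ₜ M) (p q : M) : Prop :=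
  IsPeriodicPoint ⇑f p ∧ IsPeriodicPoint ⇑f q ∧
  FullOrbit ⇑f ⇑f.symm p ≠ FullOrbit ⇑f ⇑f.symm q ∧
  (StableSetOf ⇑f.symm (FullOrbit ⇑f ⇑f.symm p) ∩
    StableSetOf ⇑f (FullOrbit ⇑f ⇑f.symm q)).Nonempty

/-- L = L(f) is the length of the longest directed path in the connection graph. -/
def IsMaxPathLength [MetricSpace M] (f : M ≃ₜ M) (L : ℕ) : Prop :=
  (∃ c : Fin (L + 1) → M, ∀ i : Fin L, Conn f (c i.castSucc) (c i.succ)) ∧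
  ∀ m : ℕ, (∃ c : Fin (m + 1) → M, ∀ i : Fin m, Conn f (c i.castSucc) (c i.succ)) → m ≤ L

/-- A topological rendering of the Morse–Smale condition: finite non-wandering set,
all non-wandering points periodic, and the no-tangency consequence of transversality:
if W^u(θ(p)) accumulates on W^s(θ(q)) then it meets it. -/
def MorseSmaleLike [MetricSpace M] (f : M ≃ₜ M) : Prop :=
  (NonwanderingSet ⇑f).Finite ∧
  (∀ x ∈ NonwanderingSet ⇑f, IsPeriodicPoint ⇑f x) ∧
  ∀ p q : M, IsPeriodicPoint ⇑f p → IsPeriodicPoint ⇑f q →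
    (closure (StableSetOf ⇑f.symm (FullOrbit ⇑f ⇑f.symm p)) ∩
      StableSetOf ⇑f (FullOrbit ⇑f ⇑f.symm q)).Nonempty →
    (StableSetOf ⇑f.symm (FullOrbit ⇑f ⇑f.symm p) ∩
      StableSetOf ⇑f (FullOrbit ⇑f ⇑f.symm q)).Nonempty

/- A wandering set meets each orbit at most once, so a coding word is a partial injection from
times to letters. Such a word is determined by the set of times at which it reads a letter of
`ℱ` together with an embedding of that set into `ℱ`; counting these by the size `k` of the set
gives `∑ₖ C(n,k) · L!/(L-k)!`, and each of its `L + 1` terms is at most `L! · n^L`. -/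

theorem Wandering.eq_of_iterate_mem {f : M → M} {Y : Set M} (hY : Wandering f Y) {x : M}
    {a b : ℕ} (ha : f^[a] x ∈ Y) (hb : f^[b] x ∈ Y) : a = b := by
  suffices ∀ a b, a < b → f^[a] x ∈ Y → f^[b] x ∈ Y → False by
    by_contra hne
    rcases Nat.lt_or_gt_of_ne hne with h | h
    exacts [this a b h ha hb, this b a h hb ha]
  intro a b hab ha hb
  have hmem : f^[b] x ∈ f^[b - a] '' Y :=
    ⟨f^[a] x, ha, by rw [← iterate_add_apply, Nat.sub_add_cancel hab.le]⟩
  exact Set.eq_empty_iff_forall_notMem.mp (hY (b - a) (by omega)) _ ⟨hmem, hb⟩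

theorem Codes.eq_of_eq_some {L n : ℕ} {f : M → M} {Y : Fin L → Set M}
    (hwand : ∀ j, Wandering f (Y j)) {w : Fin n → Option (Fin L)} {x : M} (hw : Codes f Y w x)
    {j : Fin L} {i i' : Fin n} (hi : w i = some j) (hi' : w i' = some j) : i = i' := by
  have hxi := hw i
  have hxi' := hw i'
  rw [hi] at hxi
  rw [hi'] at hxi'
  exact Fin.ext ((hwand j).eq_of_iterate_mem hxi hxi')

section PartialInjection

variable {α β : Type*}

def Function.Embedding.toWord [DecidableEq α] {s : Finset α} (e : s ↪ β) (a : α) : Option β :=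
  if h : a ∈ s then some (e ⟨a, h⟩) else none

theorem mem_range_toWord [Fintype α] [DecidableEq α] {w : α → Option β}
    (hw : ∀ j i i', w i = some j → w i' = some j → i = i') :
    w ∈ Set.range fun p : Σ s : Finset α, s ↪ β => p.2.toWord := by
  let s : Finset α := {a | (w a).isSome}
  have hs (a : s) : (w a).isSome := (Finset.mem_filter.mp a.2).2
  let e : s ↪ β := ⟨fun a => (w a).get (hs a), fun a b hab => by
    have hwa := (Option.some_get (hs a)).symm
    exact Subtype.ext (hw _ a b hwa ((Option.get_inj.mp hab).symm.trans hwa))⟩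
  refine ⟨⟨s, e⟩, funext fun a => ?_⟩
  by_cases ha : (w a).isSome
  · have has : a ∈ s := Finset.mem_filter.mpr ⟨Finset.mem_univ a, ha⟩
    simp only [Function.Embedding.toWord, dif_pos has]
    exact Option.some_get ha
  · simp_all [Function.Embedding.toWord, s]

theorem card_sigma_finset_embedding [Fintype α] [Fintype β] :
    Nat.card (Σ s : Finset α, s ↪ β) =
      ∑ k ∈ Finset.range (Fintype.card α + 1),
        (Fintype.card α).choose k * (Fintype.card β).descFactorial k := by
  rw [Nat.card_eq_fintype_card, Fintype.card_sigma, ← Finset.card_univ]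
  calc ∑ s : Finset α, Fintype.card (s ↪ β)
      = ∑ s ∈ (Finset.univ : Finset α).powerset, (Fintype.card β).descFactorial s.card := by
        rw [Finset.powerset_univ]
        simp only [Fintype.card_embedding_eq, Fintype.card_coe]
    _ = _ := Finset.sum_powerset_apply_card _

theorem card_le_card_sigma_finset_embedding [Fintype α] [DecidableEq α] [Finite β]
    {S : Set (α → Option β)} (hS : ∀ w ∈ S, ∀ j i i', w i = some j → w i' = some j → i = i') :
    Nat.card S ≤ Nat.card (Σ s : Finset α, s ↪ β) :=
  (Nat.card_mono (Set.finite_range _) fun w hw => mem_range_toWord (hS w hw)).trans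
    (Finite.card_range_le _)

end PartialInjection

theorem Nat.sum_range_choose_mul_descFactorial_eq (n m : ℕ) :
    ∑ k ∈ Finset.range (n + 1), n.choose k * m.descFactorial k =
      ∑ k ∈ Finset.range (m + 1), n.choose k * m.descFactorial k := by
  have vanish (k : ℕ) (hk : n < k ∨ m < k) : n.choose k * m.descFactorial k = 0 := by
    rcases hk with hk | hk
    · rw [Nat.choose_eq_zero_of_lt hk, zero_mul]
    · rw [Nat.descFactorial_eq_zero_iff_lt.mpr hk, mul_zero]
  rcases le_total n m with h | h
  · refine Finset.sum_subset (Finset.range_subset_range.mpr (by omega)) fun k _ hk => vanish k ?_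
    exact Or.inl (by simpa using hk)
  · refine (Finset.sum_subset (Finset.range_subset_range.mpr (by omega))
      fun k _ hk => vanish k ?_).symm
    exact Or.inr (by simpa using hk)

theorem card_le_sum_choose_mul_factorial_div {n L : ℕ} {S : Set (Fin n → Option (Fin L))}
    (hS : ∀ w ∈ S, ∀ j i i', w i = some j → w i' = some j → i = i') :
    Nat.card S ≤ ∑ k ∈ Finset.range (L + 1), n.choose k * (L.factorial / (L - k).factorial) := by
  calc Nat.card S ≤ Nat.card (Σ s : Finset (Fin n), s ↪ Fin L) :=
        card_le_card_sigma_finset_embedding hS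
    _ = ∑ k ∈ Finset.range (L + 1), n.choose k * L.descFactorial k := by
        rw [card_sigma_finset_embedding, Fintype.card_fin, Fintype.card_fin,
          Nat.sum_range_choose_mul_descFactorial_eq]
    _ = _ := Finset.sum_congr rfl fun k hk => by
        rw [Nat.descFactorial_eq_div (Nat.lt_succ_iff.mp (Finset.mem_range.mp hk))]

theorem sum_choose_mul_factorial_div_le {n : ℕ} (hn : 1 ≤ n) (L : ℕ) :
    ∑ k ∈ Finset.range (L + 1), n.choose k * (L.factorial / (L - k).factorial) ≤
      (L + 1) * L.factorial * n ^ L := by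
  calc ∑ k ∈ Finset.range (L + 1), n.choose k * (L.factorial / (L - k).factorial)
      ≤ ∑ _k ∈ Finset.range (L + 1), L.factorial * n ^ L := by
        refine Finset.sum_le_sum fun k hk => ?_
        rw [mul_comm]
        refine Nat.mul_le_mul (Nat.div_le_self _ _) ((Nat.choose_le_pow n k).trans ?_)
        exact Nat.pow_le_pow_right hn (Nat.lt_succ_iff.mp (Finset.mem_range.mp hk))
    _ = (L + 1) * L.factorial * n ^ L := by
        rw [Finset.sum_const, Finset.card_range, smul_eq_mul, mul_assoc]

theorem coding_count_upper_bound_general {M : Type*} [MetricSpace M] (f : M ≃ₜ M)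
    {L : ℕ} (Y : Fin L → Set M)
    (hwand : ∀ i, Wandering ⇑f (Y i)) :
    (∀ n : ℕ, ∀ w ∈ CodingWords ⇑f Y n, ∀ j : Fin L, ∀ i i' : Fin n,
        w i = some j → w i' = some j → i = i') ∧
    (∀ n : ℕ, codingCount ⇑f Y n ≤
        ∑ k ∈ Finset.range (L + 1), n.choose k * (L.factorial / (L - k).factorial)) ∧
    ∃ C : ℝ, 0 < C ∧ ∀ n : ℕ, 1 ≤ n → (codingCount ⇑f Y n : ℝ) ≤ C * (n : ℝ) ^ L := by
  have once : ∀ n : ℕ, ∀ w ∈ CodingWords ⇑f Y n, ∀ j : Fin L, ∀ i i' : Fin n,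
      w i = some j → w i' = some j → i = i' :=
    fun _ _ ⟨_, hx⟩ _ _ _ => hx.eq_of_eq_some hwand
  have count (n : ℕ) : codingCount ⇑f Y n ≤
      ∑ k ∈ Finset.range (L + 1), n.choose k * (L.factorial / (L - k).factorial) :=
    card_le_sum_choose_mul_factorial_div (once n)
  refine ⟨once, count, (L + 1) * L.factorial, by positivity, fun n hn => ?_⟩
  exact_mod_cast (count n).trans (sum_choose_mul_factorial_div_le hn L)

/-- for a homeomorphism f of a compact metric space and a finite family of
pairwise disjoint wandering subsets, every coding word contains each letter Y_i at most
once; consequently c_{f,ℱ}(n) ≤ Σ_{k=0}^{L} C(n,k)·L!/(L−k)!, and hence [c_{f,ℱ}(n)] ≤ [n^L]. -/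
theorem coding_count_upper_bound {M : Type*} [MetricSpace M] [CompactSpace M] (f : M ≃ₜ M)
    {L : ℕ} (Y : Fin L → Set M)
    (hdisj : Pairwise fun i j => Disjoint (Y i) (Y j))
    (hwand : ∀ i, Wandering ⇑f (Y i)) :
    (∀ n : ℕ, ∀ w ∈ CodingWords ⇑f Y n, ∀ j : Fin L, ∀ i i' : Fin n,
        w i = some j → w i' = some j → i = i') ∧
    (∀ n : ℕ, codingCount ⇑f Y n ≤
        ∑ k ∈ Finset.range (L + 1), n.choose k * (L.factorial / (L - k).factorial)) ∧
    ∃ C : ℝ, 0 < C ∧ ∀ n : ℕ, 1 ≤ n → (codingCount ⇑f Y n : ℝ) ≤ C * (n : ℝ) ^ L :=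
  coding_count_upper_bound_general f Y hwand
end

section
/- Let f : M → M be a homeomorphism of a compact metric space and ℱ = {Y₁, …, Y_L} a finite family of pairwise disjoint wandering subsets of M. Choose compact pairwise disjoint wandering neighborhoods U_i ⊇ Y_i and let ε > 0 be smaller than the distance from each Y_i to the complement of U_i. If two points x, y admit codings w ≠ z of their length-n orbit segments that use exactly the same set of letters from ℱ (plus ∞), then x and y are (n, ε)-separated, i.e. d(f^i(x), f^i(y)) > ε for some 0 ≤ i ≤ n−1. -/
open Function Metric Set Topology Filter

variable {M : Type*}

/-! If the orbits of `x` and `y` stay `ε`-close for `n` steps, then at a time where `x` visits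
`Y j`, the point `y` is in `U j`; if the coding of `y` records a visit to `Y j ⊆ U j` at all, it
must happen at that same time, because the orbit of `y` enters the wandering set `U j` at most
once. Applying this in both directions shows that the two codings agree letter by letter. -/

theorem Wandering.iterate_eq_of_mem {f : M → M} {S : Set M} (h : Wandering f S) {p : M}
    {a b : ℕ} (ha : f^[a] p ∈ S) (hb : f^[b] p ∈ S) : a = b := by
  have no_return : ∀ {a b : ℕ}, a < b → f^[a] p ∈ S → f^[b] p ∈ S → False := by
    intro a b hab ha hb
    have hmem : f^[b] p ∈ f^[b - a] '' S ∩ S :=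
      ⟨⟨f^[a] p, ha, by rw [← iterate_add_apply, Nat.sub_add_cancel hab.le]⟩, hb⟩
    simp [h (b - a) (by omega)] at hmem
  rcases lt_trichotomy a b with hab | rfl | hba
  · exact (no_return hab ha hb).elim
  · rfl
  · exact (no_return hba hb ha).elim

theorem Codes.iterate_mem {L n : ℕ} {f : M → M} {Y : Fin L → Set M}
    {w : Fin n → Option (Fin L)} {x : M} (hw : Codes f Y w x) {i : Fin n} {j : Fin L}
    (hwi : w i = some j) : f^[i] x ∈ Y j := by
  simpa [hwi] using hw i

theorem Codes.eq_some_of_shadowing [MetricSpace M] {L n : ℕ} {f : M → M} {Y U : Fin L → Set M}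
    (hwandU : ∀ j, Wandering f (U j)) (hYU : ∀ j, Y j ⊆ U j) {ε : ℝ}
    (hεd : ∀ j, ∀ x ∈ Y j, ∀ y, y ∉ U j → ε < dist x y)
    {w z : Fin n → Option (Fin L)} {x y : M} (hw : Codes f Y w x) (hz : Codes f Y z y)
    (hclose : ∀ i : Fin n, dist (f^[i] x) (f^[i] y) ≤ ε)
    {i : Fin n} {j : Fin L} (hwi : w i = some j) (hzj : ∃ i', z i' = some j) :
    z i = some j := by
  obtain ⟨i', hzi'⟩ := hzj
  have hyi : f^[i] y ∈ U j := by
    by_contra hout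
    exact (hclose i).not_gt (hεd j _ (hw.iterate_mem hwi) _ hout)
  have hyi' : f^[i'] y ∈ U j := hYU j (hz.iterate_mem hzi')
  rwa [Fin.ext ((hwandU j).iterate_eq_of_mem hyi hyi')]

theorem distinct_codings_separated_general {M : Type*} [MetricSpace M] (f : M ≃ₜ M)
    {L : ℕ} (Y U : Fin L → Set M)
    (hwandU : ∀ i, Wandering ⇑f (U i))
    (hYU : ∀ i, Y i ⊆ U i)
    (ε : ℝ)
    (hεd : ∀ i, ∀ x ∈ Y i, ∀ y, y ∉ U i → ε < dist x y)
    {n : ℕ} (w z : Fin n → Option (Fin L)) (x y : M)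
    (hw : Codes ⇑f Y w x) (hz : Codes ⇑f Y z y)
    (hletters : {j : Fin L | ∃ i, w i = some j} = {j : Fin L | ∃ i, z i = some j})
    (hne : w ≠ z) :
    ∃ i : Fin n, ε < dist ((⇑f)^[(i : ℕ)] x) ((⇑f)^[(i : ℕ)] y) := by
  by_contra! hclose
  have hletters_iff (j : Fin L) : (∃ i, w i = some j) ↔ ∃ i, z i = some j :=
    Set.ext_iff.mp hletters j
  refine hne (funext fun i => Option.ext fun j => ⟨fun hwi => ?_, fun hzi => ?_⟩)
  · exact hw.eq_some_of_shadowing hwandU hYU hεd hz hclose hwi ((hletters_iff j).mp ⟨i, hwi⟩)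
  · exact hz.eq_some_of_shadowing hwandU hYU hεd hw (fun i => (dist_comm _ _).trans_le (hclose i))
      hzi ((hletters_iff j).mpr ⟨i, hzi⟩)

/-- with pairwise disjoint wandering sets Y_i, compact pairwise disjoint
wandering neighborhoods U_i ⊇ Y_i, and ε > 0 smaller than the distance from each Y_i to
the complement of U_i, any two points admitting distinct codings with the same set of
letters are (n,ε)-separated. -/
theorem distinct_codings_separated {M : Type*} [MetricSpace M] [CompactSpace M] (f : M ≃ₜ M)
    {L : ℕ} (Y U : Fin L → Set M)
    (hdisjY : Pairwise fun i j => Disjoint (Y i) (Y j))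
    (hwandY : ∀ i, Wandering ⇑f (Y i))
    (hUcomp : ∀ i, IsCompact (U i))
    (hdisjU : Pairwise fun i j => Disjoint (U i) (U j))
    (hwandU : ∀ i, Wandering ⇑f (U i))
    (hYU : ∀ i, Y i ⊆ U i)
    (ε : ℝ) (hε : 0 < ε)
    (hεd : ∀ i, ∀ x ∈ Y i, ∀ y, y ∉ U i → ε < dist x y)
    {n : ℕ} (w z : Fin n → Option (Fin L)) (x y : M)
    (hw : Codes ⇑f Y w x) (hz : Codes ⇑f Y z y)
    (hletters : {j : Fin L | ∃ i, w i = some j} = {j : Fin L | ∃ i, z i = some j})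
    (hne : w ≠ z) :
    ∃ i : Fin n, ε < dist ((⇑f)^[(i : ℕ)] x) ((⇑f)^[(i : ℕ)] y) :=
  distinct_codings_separated_general f Y U hwandU hYU ε hεd w z x y hw hz hletters hne
end
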